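/- Let π ∈ S_NC(m₁,…,m_r) and let σ ∈ S_m with σ ≤ π. If the join of the cycle partition of σ with that of γ_{m₁,…,m_r} is the one-block partition 1_m, then σ ∈ S_NC(m₁,…,m_r). -/

import Mathlib

open Equiv

namespace ThirdOrderFree

variable {α : Type*}

/-- The setoid whose classes are the cycles (orbits) of a permutation. -/
def sameCycleSetoid (σ : Perm α) : Setoid α :=
  ⟨σ.SameCycle,
    ⟨fun x => Equiv.Perm.SameCycle.refl σ x, fun h => h.symm, fun h h' => h.trans h'⟩⟩

/-- Number of cycles (orbits, including fixed points) of a permutation. -/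
noncomputable def numCycles (σ : Perm α) : ℕ :=
  Nat.card (Quotient (sameCycleSetoid σ))

/-- The length `|σ| = n - #(σ)`. -/
noncomputable def len (σ : Perm α) : ℕ :=
  Nat.card α - numCycles σ

/-- Join of the cycle partitions of two permutations. -/
def joinSetoid (π σ : Perm α) : Setoid α :=
  sameCycleSetoid π ⊔ sameCycleSetoid σ

/-- Number of blocks of `π ∨ σ`. -/
noncomputable def numBlocks (π σ : Perm α) : ℕ :=
  Nat.card (Quotient (joinSetoid π σ))

/-- `π ∨ σ` is the one-block partition. -/
def JoinTop (π σ : Perm α) : Prop :=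
  ∀ x y : α, (joinSetoid π σ).r x y

/-- `π` is a non-crossing (annular) permutation with respect to `γ`. -/
def SNC (γ π : Perm α) : Prop :=
  JoinTop π γ ∧
    numCycles π + numCycles (π⁻¹ * γ) + numCycles γ = Nat.card α + 2

/-- `τ` separates the points of `N`: no cycle of `τ` contains two distinct points of `N`. -/
def Separates (τ : Perm α) (N : Set α) : Prop :=
  ∀ x ∈ N, ∀ y ∈ N, τ.SameCycle x y → x = y

/-- The first-return map of `σ` on the set `{x | p x}`. -/
noncomputable def firstReturn (σ : Perm α) (p : α → Prop) (x : α) : α :=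
  (σ ^ sInf {k : ℕ | 0 < k ∧ p ((σ ^ k) x)}) x

open Classical in
/-- The restriction of `σ` to `{x | p x}`: the unique permutation agreeing with the
first-return map (it exists whenever `α` is finite). -/
noncomputable def restrictPerm (σ : Perm α) (p : α → Prop) : Perm {x // p x} :=
  if h : ∃ e : Perm {x // p x}, ∀ x : {x // p x}, (e x : α) = firstReturn σ p (x : α)
  then h.choose else 1

/-- `π ≤ σ` : each cycle of `π` is contained in a cycle of `σ` and on each cycle of
`σ` the restriction of `π` is a non-crossing permutation of that cycle. -/
def le' (π σ : Perm α) : Prop :=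
  (∀ x y : α, π.SameCycle x y → σ.SameCycle x y) ∧
  ∀ x : α,
    numCycles (restrictPerm π (σ.SameCycle x)) +
      numCycles ((restrictPerm π (σ.SameCycle x))⁻¹ * restrictPerm σ (σ.SameCycle x)) =
      Nat.card {y // σ.SameCycle x y} + 1

/-- `π ≲ σ` : on each block of `π ∨ σ`, `π` is annular non-crossing w.r.t. `σ`. -/
def ncRel (π σ : Perm α) : Prop :=
  ∀ x : α,
    SNC (restrictPerm σ ((joinSetoid π σ).r x)) (restrictPerm π ((joinSetoid π σ).r x))

/-- The permutation of `Σ i, Fin (n i)` rotating each block: the product of the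
directed cycles `T i` of lengths `n i`. -/
def blockRotate {ι : Type*} (n : ι → ℕ) : Perm ((i : ι) × Fin (n i)) :=
  Equiv.sigmaCongrRight fun i => finRotate (n i)

/-- The first elements of the blocks. -/
def zeroSection {ι : Type*} (n : ι → ℕ) (hn : ∀ i, 0 < n i) :
    ι ≃ {x : (i : ι) × Fin (n i) // x.2.val = 0} where
  toFun i := ⟨⟨i, ⟨0, hn i⟩⟩, rfl⟩
  invFun x := x.1.1
  left_inv i := rfl
  right_inv := fun x => by
    obtain ⟨⟨i, j⟩, hj⟩ := x
    exact Subtype.ext (congrArg (Sigma.mk i) (Fin.ext hj.symm))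

/-- `π_{\vec n}` : merge the blocks `T i` along the cycles of `π`; within a block it
moves forward, and the last element of block `i` is sent to the first element of
block `π i`. -/
def mergePerm {ι : Type*} (n : ι → ℕ) (hn : ∀ i, 0 < n i) (π : Perm ι) :
    Perm ((i : ι) × Fin (n i)) :=
  (π.extendDomain (zeroSection n hn)) * blockRotate n

/-!
Write `#x` for the number of cycles of a permutation `x` of an `n`-element set. The genus
inequality `#x + #y + #(xy) ≤ n + 2 #(x ∨ y)` is proved by induction on `n - #y`: writing
`y = τ (τ y)` with `τ` the transposition `(a, y a)` splits a cycle of `y`, and replacing `x` by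
`x τ` changes `#x` and the number of blocks of the join in compensating ways. For `y = σ⁻¹γ`, the
hypothesis `σ ∨ γ = 1` forces `σ ∨ σ⁻¹γ = 1`, whence `#σ + #(σ⁻¹γ) + #γ ≤ n + 2`. Conversely,
`σ ≤ π` gives `#σ + #(σ⁻¹π) = n + #π`, block by block over the cycles of `π`, and the triangle
inequality `#(σ⁻¹π) + #(π⁻¹γ) ≤ n + #(σ⁻¹γ)` (the genus inequality together with
`#(x ∨ y) ≤ #(xy)`) turns `π ∈ S_NC` into the reverse inequality.
-/

section Setoids

variable {s t : Setoid α}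

theorem sameCycleSetoid_le_of_forall_apply {σ : Perm α} (h : ∀ x, t x (σ x)) :
    sameCycleSetoid σ ≤ t := by
  rintro x y ⟨k, rfl⟩
  induction k using Int.induction_on generalizing x with
  | zero => simp
  | succ k ih =>
    rw [zpow_add_one, Perm.mul_apply]
    exact t.trans (h x) (@ih (σ x))
  | pred k ih =>
    rw [zpow_sub_one, Perm.mul_apply]
    refine t.trans (t.symm ?_) (@ih (σ⁻¹ x))
    simpa using h (σ⁻¹ x)

theorem sameCycleSetoid_mul_le_joinSetoid (u v : Perm α) :
    sameCycleSetoid (u * v) ≤ joinSetoid u v :=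
  sameCycleSetoid_le_of_forall_apply fun x =>
    (joinSetoid u v).trans
      (le_sup_right (a := sameCycleSetoid u) (Perm.sameCycle_apply_right.2 (.refl v x)))
      (le_sup_left (b := sameCycleSetoid v) (Perm.sameCycle_apply_right.2 (.refl u (v x))))

theorem sameCycleSetoid_swap_le [DecidableEq α] {a b : α} (h : t a b) :
    sameCycleSetoid (swap a b) ≤ t := by
  refine sameCycleSetoid_le_of_forall_apply fun x => ?_
  rcases eq_or_ne x a with rfl | hxa
  · simpa using h
  rcases eq_or_ne x b with rfl | hxb
  · simp [t.symm h]
  · simp [swap_apply_of_ne_of_ne hxa hxb]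

variable [Finite α]

theorem card_quotient_le_of_le (h : s ≤ t) : Nat.card (Quotient t) ≤ Nat.card (Quotient s) :=
  Nat.card_le_card_of_surjective (Setoid.map_of_le h) fun c =>
    Quotient.inductionOn c fun x => ⟨⟦x⟧, rfl⟩

theorem card_quotient_lt_of_le (h : s ≤ t) {a b : α} (hs : ¬s a b) (ht : t a b) :
    Nat.card (Quotient t) < Nat.card (Quotient s) := by
  refine (card_quotient_le_of_le h).lt_of_ne fun hcard => hs (Quotient.exact ?_)
  have hsurj : Function.Surjective (Setoid.map_of_le h) := fun c =>
    Quotient.inductionOn c fun x => ⟨⟦x⟧, rfl⟩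
  have hbij := (Nat.bijective_iff_surjective_and_card _).2 ⟨hsurj, hcard.symm⟩
  exact hbij.injective (Quotient.sound ht)

end Setoids

theorem card_quotient_le_card_quotient_sup_swap_add_one [Finite α] [DecidableEq α]
    (s : Setoid α) (a b : α) :
    Nat.card (Quotient s) ≤ Nat.card (Quotient (s ⊔ sameCycleSetoid (swap a b))) + 1 := by
  classical
  set t := s ⊔ sameCycleSetoid (swap a b)
  -- merging the class of `b` into that of `a` is constant on the classes of `t`
  let merge : Quotient s → Quotient s := fun c => if c = ⟦b⟧ then ⟦a⟧ else c
  have hmerge : t ≤ Setoid.ker (merge ∘ Quotient.mk s) :=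
    sup_le (fun x y hxy => congrArg merge (Quotient.sound hxy))
      (sameCycleSetoid_swap_le (by simp [merge]))
  let e : Quotient s → Option (Quotient t) := fun c =>
    if c = ⟦b⟧ then none else some (Setoid.map_of_le le_sup_left c)
  have he : Function.Injective e := by
    intro c d hcd
    induction c using Quotient.inductionOn with | _ x =>
    induction d using Quotient.inductionOn with | _ y =>
    simp only [e] at hcd
    split_ifs at hcd with hx hy hy
    · exact hx.trans hy.symm
    · simpa [merge, hx, hy] using hmerge (Quotient.exact (Option.some_injective _ hcd))
  simpa [Finite.card_option] using Nat.card_le_card_of_injective e he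

section Cycles

theorem numCycles_one : numCycles (1 : Perm α) = Nat.card α := by
  have hbot : sameCycleSetoid (1 : Perm α) = ⊥ := by
    ext x y
    exact Perm.sameCycle_one
  rw [numCycles, hbot]
  exact Nat.card_congr Setoid.quotientBotEquiv

theorem numCycles_le_card [Finite α] (σ : Perm α) : numCycles σ ≤ Nat.card α :=
  Nat.card_le_card_of_surjective _ Quotient.mk_surjective

variable [DecidableEq α]

theorem mul_swap_pow_apply_of_forall_ne {ρ : Perm α} {a b x : α} {i : ℕ}
    (h : ∀ j < i, (ρ ^ j) x ≠ a ∧ (ρ ^ j) x ≠ b) : ((ρ * swap a b) ^ i) x = (ρ ^ i) x := by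
  induction i with
  | zero => rfl
  | succ i ih =>
    have hi := h i i.lt_succ_self
    rw [pow_succ', pow_succ', Perm.mul_apply, ih fun j hj => h j (by omega), Perm.mul_apply,
      Perm.mul_apply, swap_apply_of_ne_of_ne hi.1 hi.2]

theorem sameCycle_mul_swap_of_not_sameCycle [Finite α] {ρ : Perm α} {a b : α}
    (h : ¬ρ.SameCycle a b) : (ρ * swap a b).SameCycle a b := by
  have hex : ∃ n, (ρ ^ (n + 1)) b = b :=
    ⟨orderOf ρ - 1, by rw [Nat.sub_add_cancel (orderOf_pos ρ), pow_orderOf_eq_one]; rfl⟩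
  set n := Nat.find hex
  -- on its way from `ρ b` back to `b`, the `ρ`-orbit of `b` meets neither `a` nor `b`
  have hpath : ((ρ * swap a b) ^ n) (ρ b) = (ρ ^ n) (ρ b) := by
    refine mul_swap_pow_apply_of_forall_ne fun j hj => ⟨fun ha => h ?_, fun hb => ?_⟩
    · have hba : ρ.SameCycle b a := ⟨((j + 1 : ℕ) : ℤ), by
        rw [zpow_natCast, pow_succ, Perm.mul_apply, ha]⟩
      exact hba.symm
    · exact Nat.find_min hex hj (by rwa [pow_succ, Perm.mul_apply])
  refine ⟨((n + 1 : ℕ) : ℤ), ?_⟩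
  rw [zpow_natCast, pow_succ, Perm.mul_apply, Perm.mul_apply, swap_apply_left, hpath,
    ← Perm.mul_apply, ← pow_succ, Nat.find_spec hex]

theorem numCycles_le_numCycles_mul_swap_add_one [Finite α] (x : Perm α) (a b : α) :
    numCycles x ≤ numCycles (x * swap a b) + 1 :=
  (card_quotient_le_card_quotient_sup_swap_add_one (sameCycleSetoid x) a b).trans
    (Nat.add_le_add_right (card_quotient_le_of_le (sameCycleSetoid_mul_le_joinSetoid x _)) 1)

theorem numCycles_mul_swap_lt_of_not_sameCycle [Finite α] {ρ : Perm α} {a b : α}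
    (h : ¬ρ.SameCycle a b) : numCycles (ρ * swap a b) < numCycles ρ := by
  have hjoin := sameCycle_mul_swap_of_not_sameCycle h
  have hle : sameCycleSetoid ρ ≤ sameCycleSetoid (ρ * swap a b) := by
    simpa [mul_assoc] using (sameCycleSetoid_mul_le_joinSetoid (ρ * swap a b) (swap a b)).trans
      (sup_le le_rfl (sameCycleSetoid_swap_le hjoin))
  exact card_quotient_lt_of_le hle h hjoin

theorem numCycles_lt_numCycles_swap_mul_self [Finite α] {y : Perm α} {a : α} (ha : y a ≠ a) :
    numCycles y < numCycles (swap a (y a) * y) := by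
  have hya : y.SameCycle a (y a) := Perm.sameCycle_apply_right.2 (.refl y a)
  -- `swap a (y a) * y` splits off the fixed point `a` from the cycle of `y` through `a`
  have hfix : (swap a (y a) * y) a = a := by simp
  refine card_quotient_lt_of_le ((sameCycleSetoid_mul_le_joinSetoid _ y).trans
    (sup_le (sameCycleSetoid_swap_le hya) le_rfl)) (fun ⟨k, hk⟩ => ha ?_) hya
  rw [Perm.zpow_apply_eq_self_of_apply_eq_self hfix] at hk
  exact hk.symm

theorem joinSetoid_le_joinSetoid_mul_swap_swap_mul_sup (x y : Perm α) (a b : α) :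
    joinSetoid x y ≤
      joinSetoid (x * swap a b) (swap a b * y) ⊔ sameCycleSetoid (swap a b) := by
  have hx : sameCycleSetoid x ≤ joinSetoid (x * swap a b) (swap a b) := by
    simpa [mul_assoc] using sameCycleSetoid_mul_le_joinSetoid (x * swap a b) (swap a b)
  have hy : sameCycleSetoid y ≤ joinSetoid (swap a b) (swap a b * y) := by
    simpa using sameCycleSetoid_mul_le_joinSetoid (swap a b) (swap a b * y)
  exact sup_le (hx.trans (sup_le_sup_right le_sup_left _))
    (hy.trans (sup_le le_sup_right (le_sup_right.trans le_sup_left)))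

end Cycles

theorem numCycles_add_numCycles_add_numCycles_mul_le [Finite α] (x y : Perm α) :
    numCycles x + numCycles y + numCycles (x * y) ≤ Nat.card α + 2 * numBlocks x y := by
  classical
  by_cases hy : y = 1
  · subst hy
    have hjoin : joinSetoid x 1 = sameCycleSetoid x :=
      sup_eq_left.2 (sameCycleSetoid_le_of_forall_apply fun z => by simp)
    rw [numBlocks, hjoin, mul_one, numCycles_one]
    change numCycles x + _ + numCycles x ≤ _ + 2 * numCycles x
    omega
  obtain ⟨a, ha⟩ : ∃ a, y a ≠ a := not_forall.1 fun h => hy (Perm.ext h)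
  set τ := swap a (y a)
  have hsplit : numCycles y < numCycles (τ * y) := numCycles_lt_numCycles_swap_mul_self ha
  have hdecr : Nat.card α - numCycles (τ * y) < Nat.card α - numCycles y := by
    have := numCycles_le_card (τ * y)
    omega
  have ih := numCycles_add_numCycles_add_numCycles_mul_le (x * τ) (τ * y)
  rw [show x * τ * (τ * y) = x * y by simp [τ, mul_assoc]] at ih
  have hx : numCycles x ≤ numCycles (x * τ) + 1 :=
    numCycles_le_numCycles_mul_swap_add_one x a (y a)
  have hblocks : joinSetoid x y ≤ joinSetoid (x * τ) (τ * y) ⊔ sameCycleSetoid τ :=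
    joinSetoid_le_joinSetoid_mul_swap_swap_mul_sup x y a (y a)
  by_cases hab : joinSetoid (x * τ) (τ * y) a (y a)
  · have : numBlocks (x * τ) (τ * y) ≤ numBlocks x y :=
      card_quotient_le_of_le (hblocks.trans (sup_le le_rfl (sameCycleSetoid_swap_le hab)))
    omega
  · have hmerge : numCycles x < numCycles (x * τ) := by
      simpa [τ, mul_assoc] using numCycles_mul_swap_lt_of_not_sameCycle
        fun h => hab (le_sup_left (a := sameCycleSetoid (x * τ)) h)
    have : numBlocks (x * τ) (τ * y) ≤ numBlocks x y + 1 :=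
      (card_quotient_le_card_quotient_sup_swap_add_one _ a (y a)).trans
        (Nat.add_le_add_right (card_quotient_le_of_le hblocks) 1)
    omega
termination_by Nat.card α - numCycles y
decreasing_by exact hdecr

theorem numCycles_add_numCycles_le_card_add_numCycles_mul [Finite α] (x y : Perm α) :
    numCycles x + numCycles y ≤ Nat.card α + numCycles (x * y) := by
  have hgenus := numCycles_add_numCycles_add_numCycles_mul_le x y
  have hblocks : numBlocks x y ≤ numCycles (x * y) :=
    card_quotient_le_of_le (sameCycleSetoid_mul_le_joinSetoid x y)
  omega

theorem JoinTop.numBlocks_le_one [Finite α] {π σ : Perm α} (h : JoinTop π σ) :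
    numBlocks π σ ≤ 1 :=
  Finite.card_le_one_iff_subsingleton.2
    ⟨fun c d => Quotient.inductionOn₂ c d fun x y => Quotient.sound (h x y)⟩

theorem JoinTop.inv_mul {σ γ : Perm α} (h : JoinTop σ γ) : JoinTop σ (σ⁻¹ * γ) := by
  have hγ : sameCycleSetoid γ ≤ joinSetoid σ (σ⁻¹ * γ) := by
    simpa using sameCycleSetoid_mul_le_joinSetoid σ (σ⁻¹ * γ)
  exact fun x y => sup_le le_sup_left hγ (h x y)

section Restriction

theorem restrictPerm_eq_subtypePerm {σ : Perm α} {p : α → Prop} (hp : ∀ x, p (σ x) ↔ p x) :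
    restrictPerm σ p = σ.subtypePerm hp := by
  have hfirst : ∀ x : {x // p x}, firstReturn σ p x = σ x := by
    intro x
    have h1 : 1 ∈ {k : ℕ | 0 < k ∧ p ((σ ^ k) x)} := ⟨one_pos, by simpa using (hp x).2 x.2⟩
    rw [firstReturn, le_antisymm (Nat.sInf_le h1) (Nat.sInf_mem ⟨1, h1⟩).1, pow_one]
  have hex : ∃ e : Perm {x // p x}, ∀ x : {x // p x}, (e x : α) = firstReturn σ p x :=
    ⟨σ.subtypePerm hp, fun x => (hfirst x).symm⟩
  rw [restrictPerm, dif_pos hex]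
  exact Equiv.ext fun x => Subtype.ext ((hex.choose_spec x).trans (hfirst x))

variable {t : Setoid α}

def restrictClass {u : Perm α} (hu : ∀ x, t x (u x)) (c : Quotient t) :
    Perm {x // Quotient.mk t x = c} :=
  u.subtypePerm fun x => by rw [← Quotient.sound (hu x)]

theorem restrictPerm_eq_restrictClass {u : Perm α} (hu : ∀ x, t x (u x)) (c : Quotient t) :
    restrictPerm u (fun x => Quotient.mk t x = c) = restrictClass hu c :=
  restrictPerm_eq_subtypePerm _

theorem numCycles_eq_card_sigma_restrictClass {u : Perm α} (hu : ∀ x, t x (u x)) :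
    numCycles u =
      Nat.card (Σ c : Quotient t, Quotient (sameCycleSetoid (restrictClass hu c))) := by
  let forget : (Σ c : Quotient t, Quotient (sameCycleSetoid (restrictClass hu c))) →
      Quotient (sameCycleSetoid u) := fun q =>
    Quotient.lift (s := sameCycleSetoid (restrictClass hu q.1)) (fun z => Quotient.mk _ z.1)
      (fun _ _ h => Quotient.sound (Perm.sameCycle_subtypePerm.1 h)) q.2
  refine (Nat.card_eq_of_bijective forget ⟨?_, ?_⟩).symm
  · rintro ⟨c, q⟩ ⟨d, r⟩ h
    induction q using Quotient.inductionOn with | _ z =>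
    induction r using Quotient.inductionOn with | _ w =>
    have hzw : u.SameCycle z w := Quotient.exact h
    obtain rfl : c = d :=
      z.2.symm.trans ((Quotient.sound (sameCycleSetoid_le_of_forall_apply hu hzw)).trans w.2)
    exact Sigma.ext rfl (heq_of_eq (Quotient.sound (Perm.sameCycle_subtypePerm.2 hzw)))
  · intro q
    induction q using Quotient.inductionOn with | _ x =>
    exact ⟨⟨Quotient.mk t x, Quotient.mk _ ⟨x, rfl⟩⟩, rfl⟩

end Restriction

theorem le'.numCycles_add_numCycles_inv_mul [Finite α] {σ π : Perm α} (h : le' σ π) :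
    numCycles σ + numCycles (σ⁻¹ * π) = Nat.card α + numCycles π := by
  classical
  have := Fintype.ofFinite α
  set t := sameCycleSetoid π
  have hπ : ∀ x, t x (π x) := fun x => Perm.sameCycle_apply_right.2 (.refl π x)
  have hσ : ∀ x, t x (σ x) := fun x => h.1 _ _ (Perm.sameCycle_apply_right.2 (.refl σ x))
  have hρ : ∀ x, t x ((σ⁻¹ * π) x) := fun x =>
    t.trans (hπ x) (t.symm (by simpa using hσ (σ⁻¹ (π x))))
  have hclass : ∀ c : Quotient t, numCycles (restrictClass hσ c) +
      numCycles (restrictClass hρ c) = Nat.card {x // Quotient.mk t x = c} + 1 := by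
    intro c
    have hc := h.2 c.out
    have hpred : π.SameCycle c.out = fun x => Quotient.mk t x = c := by
      ext x
      exact ⟨fun hx => (Quotient.sound hx).symm.trans c.out_eq,
        fun hx => Quotient.exact (c.out_eq.trans hx.symm)⟩
    rw [hpred, restrictPerm_eq_restrictClass hσ, restrictPerm_eq_restrictClass hπ] at hc
    convert hc using 3
    exact Equiv.ext fun x => rfl
  have hcard : Nat.card α = ∑ c, Nat.card {x // Quotient.mk t x = c} := by
    rw [← Nat.card_sigma, Nat.card_congr (Equiv.sigmaFiberEquiv _)]
  rw [numCycles_eq_card_sigma_restrictClass hσ, numCycles_eq_card_sigma_restrictClass hρ,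
    Nat.card_sigma, Nat.card_sigma, hcard, numCycles, Nat.card_eq_fintype_card,
    Fintype.card_eq_sum_ones, ← Finset.sum_add_distrib, ← Finset.sum_add_distrib]
  exact Finset.sum_congr rfl fun c _ => hclass c


theorem SNC.of_le'_of_joinTop [Finite α] {γ π σ : Perm α} (hπ : SNC γ π) (hσ : le' σ π)
    (hjoin : JoinTop σ γ) : SNC γ σ := by
  refine ⟨hjoin, le_antisymm ?_ ?_⟩
  · have hgenus := numCycles_add_numCycles_add_numCycles_mul_le σ (σ⁻¹ * γ)
    rw [mul_inv_cancel_left] at hgenus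
    have := hjoin.inv_mul.numBlocks_le_one
    omega
  · have hcount := hσ.numCycles_add_numCycles_inv_mul
    have htriangle := numCycles_add_numCycles_le_card_add_numCycles_mul (σ⁻¹ * π) (π⁻¹ * γ)
    rw [show σ⁻¹ * π * (π⁻¹ * γ) = σ⁻¹ * γ by group] at htriangle
    have := hπ.2
    omega

theorem stmt7_general {r : ℕ} (m : Fin r → ℕ)
    (γ : Equiv.Perm ((i : Fin r) × Fin (m i)))
    (π σ : Equiv.Perm ((i : Fin r) × Fin (m i)))
    (hπ : SNC γ π) (hσ : le' σ π) (hjoin : JoinTop σ γ) :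
    SNC γ σ :=
  hπ.of_le'_of_joinTop hσ hjoin

/-- if `π ∈ S_NC(m₁,…,m_r)`, `σ ≤ π` and `σ ∨ γ = 1`, then
`σ ∈ S_NC(m₁,…,m_r)`. -/
theorem stmt7 {r : ℕ} (m : Fin r → ℕ)
    (γ : Equiv.Perm ((i : Fin r) × Fin (m i))) (hγ : γ = blockRotate m)
    (π σ : Equiv.Perm ((i : Fin r) × Fin (m i)))
    (hπ : SNC γ π) (hσ : le' σ π) (hjoin : JoinTop σ γ) :
    SNC γ σ :=
  stmt7_general m γ π σ hπ hσ hjoin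

end ThirdOrderFree
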